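/- (Eigencircuits of the maximal direct-cause indicator.) Let d ≥ 2. A process comb J yields the outcome j with probability 1 under the direct-cause indicator with identity unitaries, i.e. (1/d) Tr[J · (I_A ⊗ (|Φ_j⟩⟨Φ_j|)_{BC})] = 1, if and only if J = σ_A ⊗ d|Φ_j⟩⟨Φ_j|_{BC} for some positive semidefinite σ_A with Tr σ_A = 1; in particular every eigencircuit of the direct-cause indicator implements a lossless (unitary) channel from B to C. -/

import Mathlib

open Matrix BigOperators ComplexOrder

noncomputable section

/-- Index type for the three systems A, B, C. -/
abbrev PIdx (dA dB dC : ℕ) := Fin dA × Fin dB × Fin dC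

/-- Matrices on `ℂ^{dA} ⊗ ℂ^{dB} ⊗ ℂ^{dC}`. -/
abbrev PMat (dA dB dC : ℕ) := Matrix (PIdx dA dB dC) (PIdx dA dB dC) ℂ

/-- Partial trace over the third (C) tensor factor. -/
def trC {dA dB dC : ℕ} (M : PMat dA dB dC) :
    Matrix (Fin dA × Fin dB) (Fin dA × Fin dB) ℂ :=
  Matrix.of fun i j => ∑ c : Fin dC, M (i.1, i.2, c) (j.1, j.2, c)

/-- Partial trace over the second tensor factor of a bipartite matrix. -/
def trSnd {d₁ d₂ : ℕ} (M : Matrix (Fin d₁ × Fin d₂) (Fin d₁ × Fin d₂) ℂ) :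
    Matrix (Fin d₁) (Fin d₁) ℂ :=
  Matrix.of fun a a' => ∑ b : Fin d₂, M (a, b) (a', b)

/-- A process comb: a PSD matrix `J` on A ⊗ B ⊗ C with `Tr_C J = ρ_A ⊗ I_B`
for some state `ρ_A`. -/
def IsProcessComb {dA dB dC : ℕ} (J : PMat dA dB dC) : Prop :=
  J.PosSemidef ∧ ∃ ρ : Matrix (Fin dA) (Fin dA) ℂ,
    ρ.PosSemidef ∧ ρ.trace = 1 ∧
    trC J = Matrix.of fun i j => ρ i.1 j.1 * (if i.2 = j.2 then (1 : ℂ) else 0)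

/-- A tester with `m` outcomes: PSD matrices `T x` with `∑ x, T x = Λ ⊗ I_C`
for some PSD `Λ` on A ⊗ B with `Tr_B Λ = I_A`. -/
def IsTester {dA dB dC m : ℕ} (T : Fin m → PMat dA dB dC) : Prop :=
  (∀ x, (T x).PosSemidef) ∧
  ∃ Λ : Matrix (Fin dA × Fin dB) (Fin dA × Fin dB) ℂ,
    Λ.PosSemidef ∧ trSnd Λ = 1 ∧
    (∑ x, T x) = Matrix.of fun i j =>
      Λ (i.1, i.2.1) (j.1, j.2.1) * (if i.2.2 = j.2.2 then (1 : ℂ) else 0)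

/-- Outcome probability `Tr[J T]` (as a real number). -/
def prob {dA dB dC : ℕ} (J T : PMat dA dB dC) : ℝ := ((J * T).trace).re

/-- `P_k`: Bob's optimal winning probability in the quantum roulette with `k` chips,
for the pair of testers `T`, `S`. -/
def rouletteP {dA dB dC m : ℕ} (T S : Fin m → PMat dA dB dC) (k : ℕ) : ℝ :=
  sSup { r : ℝ | ∃ J : PMat dA dB dC, IsProcessComb J ∧
    ∃ G : Finset (Fin 2 × Fin m), G.card = k ∧
      r = ∑ g ∈ G, (1 / 2 : ℝ) * prob J (if g.1 = 0 then T g.2 else S g.2) }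

/-- The roulette vector `w ∈ ℝ^{2m}`, `w_k = P_k - P_{k-1}`. -/
def rouletteW {dA dB dC m : ℕ} (T S : Fin m → PMat dA dB dC) : Fin (m + m) → ℝ :=
  fun k => rouletteP T S (k.1 + 1) - rouletteP T S k.1

/-- Sum of the `k` largest entries of a (nonnegative) vector, padding with zeros. -/
def kMaxSum {n : ℕ} (u : Fin n → ℝ) (k : ℕ) : ℝ :=
  sSup { r : ℝ | ∃ A : Finset (Fin n), A.card = min k n ∧ r = ∑ i ∈ A, u i }

/-- `MajorizedBy u v` means `u ≺ v`: every partial sum of the `k` largest entries of `u`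
is at most that of `v`, and the total sums agree. -/
def MajorizedBy {m n : ℕ} (u : Fin m → ℝ) (v : Fin n → ℝ) : Prop :=
  (∀ k : ℕ, kMaxSum u k ≤ kMaxSum v k) ∧ ∑ i, u i = ∑ i, v i

/-- Base-2 Shannon entropy of a finite vector. -/
def H2 {n : ℕ} (p : Fin n → ℝ) : ℝ := -∑ i, p i * Real.logb 2 (p i)

/-- Rank-one projector `|φ⟩⟨φ|` on a bipartite system. -/
def projMat {d : ℕ} (φ : Fin d × Fin d → ℂ) :
    Matrix (Fin d × Fin d) (Fin d × Fin d) ℂ :=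
  Matrix.of fun x y => φ x * (starRingEnd ℂ) (φ y)

/-- Embed an operator on A ⊗ C as an operator on A ⊗ B ⊗ C acting as the identity on B. -/
def embAC {d : ℕ} (M : Matrix (Fin d × Fin d) (Fin d × Fin d) ℂ) : PMat d d d :=
  Matrix.of fun i j => M (i.1, i.2.2) (j.1, j.2.2) * (if i.2.1 = j.2.1 then (1 : ℂ) else 0)

/-- Embed an operator on B ⊗ C as an operator on A ⊗ B ⊗ C acting as the identity on A. -/
def embBC {d : ℕ} (M : Matrix (Fin d × Fin d) (Fin d × Fin d) ℂ) : PMat d d d :=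
  Matrix.of fun i j => M (i.2.1, i.2.2) (j.2.1, j.2.2) * (if i.1 = j.1 then (1 : ℂ) else 0)

/-- `(U ⊗ V) |φ⟩` for a bipartite vector `φ`. -/
def kronVec {d : ℕ} (U V : Matrix (Fin d) (Fin d) ℂ) (φ : Fin d × Fin d → ℂ) :
    Fin d × Fin d → ℂ :=
  fun x => ∑ y : Fin d × Fin d, U x.1 y.1 * V x.2 y.2 * φ y

/-- An orthonormal basis `{Φ_i}` of `ℂ^d ⊗ ℂ^d` consisting of maximally entangled vectors,
with `Φ_1 = (1/√d) ∑_k |kk⟩`. -/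
def IsMaxEntBasis {d : ℕ} (Φ : Fin (d * d) → Fin d × Fin d → ℂ) : Prop :=
  (∀ i j, ∑ x : Fin d × Fin d, (starRingEnd ℂ) (Φ i x) * Φ j x
      = if i = j then (1 : ℂ) else 0) ∧
  (∀ i a a', ∑ b : Fin d, Φ i (a, b) * (starRingEnd ℂ) (Φ i (a', b))
      = if a = a' then (1 : ℂ) / d else 0) ∧
  (∀ i b b', ∑ a : Fin d, Φ i (a, b) * (starRingEnd ℂ) (Φ i (a, b'))
      = if b = b' then (1 : ℂ) / d else 0) ∧
  ∀ (h : 0 < d * d) (x : Fin d × Fin d),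
    Φ ⟨0, h⟩ x = if x.1 = x.2 then ((1 / Real.sqrt d : ℝ) : ℂ) else 0

/-- Outcome distribution of the common-cause indicator `T_CC(U₁, U₂)` on a process comb:
`p_i = (1/d) Tr[J ((U₁⊗U₂)|Φ_i⟩⟨Φ_i|(U₁⊗U₂)†)_{AC} ⊗ I_B]`. -/
def ccProb {d : ℕ} (U₁ U₂ : Matrix (Fin d) (Fin d) ℂ)
    (Φ : Fin (d * d) → Fin d × Fin d → ℂ) (J : PMat d d d) : Fin (d * d) → ℝ :=
  fun i => (1 / d) * prob J (embAC (projMat (kronVec U₁ U₂ (Φ i))))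

/-- Outcome distribution of the direct-cause indicator `T_DC(U₃, U₄)` on a process comb:
`q_i = (1/d) Tr[J (I_A ⊗ ((U₃⊗U₄)|Φ_i⟩⟨Φ_i|(U₃⊗U₄)†)_{BC})]`. -/
def dcProb {d : ℕ} (U₃ U₄ : Matrix (Fin d) (Fin d) ℂ)
    (Φ : Fin (d * d) → Fin d × Fin d → ℂ) (J : PMat d d d) : Fin (d * d) → ℝ :=
  fun i => (1 / d) * prob J (embBC (projMat (kronVec U₃ U₄ (Φ i))))

/-!
With `V = 1_A ⊗ |Φ_j⟩` we have `I_A ⊗ |Φ_j⟩⟨Φ_j| = V Vᴴ`, so `q_j = Tr (J V Vᴴ) / d`, while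
`Tr J = d` for every comb. Since `J ≥ 0` and `V Vᴴ` is an orthogonal projection,
`Tr (J V Vᴴ) = Tr J` forces `J` to be supported on its range, i.e. `J = V (Vᴴ J V) Vᴴ`, and
`σ = Vᴴ J V / d` is the required state.
-/

section PosSemidef

variable {n m 𝕜 : Type*} [Fintype n] [Fintype m] [DecidableEq n] [RCLike 𝕜]

open scoped MatrixOrder in
/-- Writing `J = Bᴴ B` and `Q = 1 - P`, the defect `Tr J - Tr (J P)` is `Tr ((B Q)ᴴ (B Q))`,
which vanishes only if `B Q = 0`. -/
lemma Matrix.PosSemidef.mul_eq_self_of_re_trace_mul_eq {J P : Matrix n n 𝕜}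
    (hJ : J.PosSemidef) (hP : P.IsHermitian) (hPP : IsIdempotentElem P)
    (h : RCLike.re (J * P).trace = RCLike.re J.trace) : J * P = J := by
  obtain ⟨B, rfl⟩ := CStarAlgebra.nonneg_iff_eq_star_mul_self.mp hJ.nonneg
  set Q := 1 - P
  have hQ : Qᴴ = Q := by simp [Q, hP.eq]
  have hQQ : Q * Q = Q := hPP.one_sub.eq
  have hre : RCLike.re ((B * Q)ᴴ * (B * Q)).trace = 0 := by
    rw [conjTranspose_mul, hQ, Matrix.mul_assoc, ← Matrix.mul_assoc Bᴴ, trace_mul_comm,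
      Matrix.mul_assoc, hQQ, Matrix.mul_sub, Matrix.mul_one, trace_sub, map_sub]
    exact sub_eq_zero.mpr h.symm
  have hBQ : B * Q = 0 := by
    refine trace_conjTranspose_mul_self_eq_zero_iff.mp (RCLike.ext ?_ ?_)
    · simpa using hre
    · simpa using
        (RCLike.nonneg_iff.mp (posSemidef_conjTranspose_mul_self (B * Q)).trace_nonneg).2
  calc star B * B * P = star B * B - star B * (B * Q) := by
        simp [Q, Matrix.mul_sub, Matrix.mul_assoc]
    _ = star B * B := by rw [hBQ, Matrix.mul_zero, sub_zero]

lemma Matrix.trace_mul_mul_conjTranspose_of_isometry {V : Matrix m n 𝕜} (hV : Vᴴ * V = 1)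
    (M : Matrix n n 𝕜) : (V * M * Vᴴ).trace = M.trace := by
  rw [trace_mul_cycle, hV, Matrix.one_mul]

lemma Matrix.PosSemidef.re_trace_mul_mul_conjTranspose_eq_iff [DecidableEq m]
    {J : Matrix m m 𝕜} {V : Matrix m n 𝕜} (hJ : J.PosSemidef) (hV : Vᴴ * V = 1) :
    RCLike.re (J * (V * Vᴴ)).trace = RCLike.re J.trace ↔ J = V * (Vᴴ * J * V) * Vᴴ := by
  have hVV : V * Vᴴ * (V * Vᴴ) = V * Vᴴ := by
    rw [Matrix.mul_assoc, ← Matrix.mul_assoc Vᴴ, hV, Matrix.one_mul]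
  constructor
  · intro h
    have hJP : J * (V * Vᴴ) = J :=
      hJ.mul_eq_self_of_re_trace_mul_eq (isHermitian_mul_conjTranspose_self V) hVV h
    have hPJ : V * Vᴴ * J = J := by
      simpa [Matrix.conjTranspose_mul, hJ.isHermitian.eq] using congrArg (·ᴴ) hJP
    calc J = V * Vᴴ * J * (V * Vᴴ) := by rw [hPJ, hJP]
      _ = V * (Vᴴ * J * V) * Vᴴ := by simp only [Matrix.mul_assoc]
  · intro h
    rw [h, Matrix.mul_assoc _ Vᴴ, ← Matrix.mul_assoc Vᴴ, hV, Matrix.one_mul]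

end PosSemidef

section TensorVec

variable {ι κ R : Type*} [DecidableEq ι] [CommSemiring R] [StarRing R]

variable (ι) in
/-- The matrix of `a ↦ |a⟩ ⊗ φ`, i.e. of `1 ⊗ |φ⟩`. -/
def idTensorVec (φ : κ → R) : Matrix (ι × κ) ι R :=
  Matrix.of fun p a => if p.1 = a then φ p.2 else 0

lemma idTensorVec_mul_mul_conjTranspose [Fintype ι] (φ : κ → R) (N : Matrix ι ι R) :
    idTensorVec ι φ * N * (idTensorVec ι φ)ᴴ =
      Matrix.of fun p q => N p.1 q.1 * (φ p.2 * star (φ q.2)) := by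
  ext p q
  simp only [idTensorVec, Matrix.mul_apply, of_apply, conjTranspose_apply, ite_mul, zero_mul,
    mul_ite, mul_zero, apply_ite star, star_zero, Finset.sum_ite_eq, Finset.mem_univ, ↓reduceIte]
  ring

lemma conjTranspose_idTensorVec_mul_self [Fintype ι] [Fintype κ] {φ : κ → R}
    (hφ : star φ ⬝ᵥ φ = 1) : (idTensorVec ι φ)ᴴ * idTensorVec ι φ = 1 := by
  ext a b
  simp only [dotProduct, Pi.star_apply] at hφ
  simp [idTensorVec, Matrix.mul_apply, Fintype.sum_prod_type, apply_ite star, hφ, one_apply,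
    eq_comm]

end TensorVec

lemma trace_trC {dA dB dC : ℕ} (M : PMat dA dB dC) : (trC M).trace = M.trace := by
  simp [trace, trC, Fintype.sum_prod_type]

lemma IsProcessComb.trace_eq {dA dB dC : ℕ} {J : PMat dA dB dC} (hJ : IsProcessComb J) :
    J.trace = dB := by
  obtain ⟨-, ρ, -, hρ, hJρ⟩ := hJ
  rw [← trace_trC, hJρ]
  simp only [trace, diag_apply, of_apply, mul_ite, mul_one, mul_zero, ↓reduceIte,
    Fintype.sum_prod_type, Finset.sum_const, Finset.card_univ, Fintype.card_fin, nsmul_eq_mul,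
    ← Finset.mul_sum]
  rw [show ∑ a, ρ a a = ρ.trace from rfl, hρ, mul_one]

lemma kronVec_one_one {d : ℕ} (φ : Fin d × Fin d → ℂ) : kronVec 1 1 φ = φ := by
  ext x
  simp [kronVec, one_apply, Fintype.sum_prod_type]

lemma embBC_projMat {d : ℕ} (φ : Fin d × Fin d → ℂ) :
    embBC (projMat φ) = idTensorVec (Fin d) φ * (idTensorVec (Fin d) φ)ᴴ := by
  have h := idTensorVec_mul_mul_conjTranspose (ι := Fin d) φ 1
  rw [Matrix.mul_one] at h
  rw [h]
  ext p q
  simp [embBC, projMat, one_apply, mul_comm]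

lemma dcProb_one_one {d : ℕ} (Φ : Fin (d * d) → Fin d × Fin d → ℂ) (J : PMat d d d)
    (i : Fin (d * d)) :
    dcProb 1 1 Φ J i =
      RCLike.re (J * (idTensorVec (Fin d) (Φ i) * (idTensorVec (Fin d) (Φ i))ᴴ)).trace / d := by
  rw [dcProb, prob, kronVec_one_one, embBC_projMat, one_div, inv_mul_eq_div]
  rfl

lemma tensor_smul_projMat_eq {d : ℕ} (σ : Matrix (Fin d) (Fin d) ℂ) (c : ℂ)
    (φ : Fin d × Fin d → ℂ) :
    (Matrix.of fun p q => σ p.1 q.1 * (c * projMat φ (p.2.1, p.2.2) (q.2.1, q.2.2)) :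
      PMat d d d) = idTensorVec (Fin d) φ * (c • σ) * (idTensorVec (Fin d) φ)ᴴ := by
  rw [idTensorVec_mul_mul_conjTranspose]
  ext p q
  simp only [projMat, of_apply, Matrix.smul_apply, smul_eq_mul, RCLike.star_def]
  ring

theorem direct_cause_indicator_eigencircuits_general {d : ℕ}
    (Φ : Fin (d * d) → Fin d × Fin d → ℂ) (hΦ : IsMaxEntBasis Φ)
    (j : Fin (d * d)) (J : PMat d d d) (hJ : IsProcessComb J) :
    dcProb 1 1 Φ J j = 1 ↔
      ∃ σ : Matrix (Fin d) (Fin d) ℂ, σ.PosSemidef ∧ σ.trace = 1 ∧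
        J = Matrix.of fun p q =>
          σ p.1 q.1 * ((d : ℂ) * projMat (Φ j) (p.2.1, p.2.2) (q.2.1, q.2.2)) := by
  have hd : (d : ℂ) ≠ 0 := Nat.cast_ne_zero.mpr (by rintro rfl; exact j.elim0)
  have htr : RCLike.re J.trace = d := by simp [hJ.trace_eq]
  simp only [tensor_smul_projMat_eq]
  rw [dcProb_one_one, div_eq_one_iff_eq (by exact_mod_cast hd), ← htr]
  set V := idTensorVec (Fin d) (Φ j)
  have hV : Vᴴ * V = 1 :=
    conjTranspose_idTensorVec_mul_self (by simpa [dotProduct] using hΦ.1 j j)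
  rw [hJ.1.re_trace_mul_mul_conjTranspose_eq_iff hV]
  constructor
  · intro hJV
    refine ⟨(d : ℂ)⁻¹ • (Vᴴ * J * V), (hJ.1.conjTranspose_mul_mul_same V).smul (by positivity),
      ?_, ?_⟩
    · rw [trace_smul, ← trace_mul_mul_conjTranspose_of_isometry hV, ← hJV, hJ.trace_eq,
        smul_eq_mul, inv_mul_cancel₀ hd]
    · rwa [smul_smul, mul_inv_cancel₀ hd, one_smul]
  · rintro ⟨σ, -, -, rfl⟩
    simp only [Matrix.mul_assoc, hV, Matrix.mul_one]
    rw [← Matrix.mul_assoc Vᴴ V, hV, Matrix.one_mul]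

/-- eigencircuits of the maximal direct-cause indicator: a process comb
`J` gives outcome `j` with probability one under the direct-cause indicator (with
identity unitaries) iff `J = σ_A ⊗ d |Φ_j⟩⟨Φ_j|_{BC}` for some state `σ_A`. -/
theorem direct_cause_indicator_eigencircuits {d : ℕ} (hd : 2 ≤ d)
    (Φ : Fin (d * d) → Fin d × Fin d → ℂ) (hΦ : IsMaxEntBasis Φ)
    (j : Fin (d * d)) (J : PMat d d d) (hJ : IsProcessComb J) :
    dcProb 1 1 Φ J j = 1 ↔
      ∃ σ : Matrix (Fin d) (Fin d) ℂ, σ.PosSemidef ∧ σ.trace = 1 ∧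
        J = Matrix.of fun p q =>
          σ p.1 q.1 * ((d : ℂ) * projMat (Φ j) (p.2.1, p.2.2) (q.2.1, q.2.2)) :=
  direct_cause_indicator_eigencircuits_general Φ hΦ j J hJ
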